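/- arXiv:1907.00814 — 6 statements merged into one kernel-verified Lean document; each statement's English description precedes it below -/
import Mathlib

section
/- If X ⊆ ℝⁿ is bounded, then for every signomial f = Sig(α,c) with α₁ = 0, the SAGE bound f^SAGE_X = sup{ γ : c − γ·e₁ ∈ C_SAGE(α,X) } is finite (strictly greater than −∞). -/
open Finset

/-- Exponential-form signomial: `Sig α c x = ∑ i, c i * exp (αᵢ · x)`. -/
noncomputable def Sig {n m : ℕ} (α : Fin m → Fin n → ℝ) (c : Fin m → ℝ)
    (x : Fin n → ℝ) : ℝ :=
  ∑ i, c i * Real.exp (∑ j, α i j * x j)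

/-- The `k`-th conditional AGE cone. -/
def CAGE {n m : ℕ} (α : Fin m → Fin n → ℝ) (k : Fin m) (X : Set (Fin n → ℝ)) :
    Set (Fin m → ℝ) :=
  {c | (∀ i, i ≠ k → 0 ≤ c i) ∧ ∀ x ∈ X, 0 ≤ Sig α c x}

/-- The conditional SAGE cone: Minkowski sum of the conditional AGE cones. -/
def CSAGE {n m : ℕ} (α : Fin m → Fin n → ℝ) (X : Set (Fin n → ℝ)) :
    Set (Fin m → ℝ) :=
  {c | ∃ d : Fin m → Fin m → ℝ, (∀ k, d k ∈ CAGE α k X) ∧ c = ∑ k, d k}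

lemma Sig_add {n m : ℕ} (α : Fin m → Fin n → ℝ) (a b : Fin m → ℝ) (x : Fin n → ℝ) :
    Sig α (a + b) x = Sig α a x + Sig α b x := by
  simp [Sig, add_mul, Finset.sum_add_distrib]

lemma Sig_single {n m : ℕ} (α : Fin m → Fin n → ℝ) (k : Fin m) (v : ℝ) (x : Fin n → ℝ) :
    Sig α (Pi.single k v) x = v * Real.exp (∑ j, α k j * x j) := by
  simp [Sig, Pi.single_apply, ite_mul, Finset.sum_ite_eq]

/-- If X is bounded, the conditional SAGE bound of every signomial is finite. -/
theorem sage_bound_finite_of_bounded {n m : ℕ} (hm : 0 < m)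
    (α : Fin m → Fin n → ℝ) (c : Fin m → ℝ) (hα : α ⟨0, hm⟩ = 0)
    (X : Set (Fin n → ℝ)) (hX : Bornology.IsBounded X) :
    ⊥ < ⨆ γ ∈ {γ : ℝ | (c - Pi.single (⟨0, hm⟩ : Fin m) γ) ∈ CSAGE α X},
          (γ : EReal) := by
  obtain ⟨R, hR⟩ := hX.subset_closedBall 0
  set k0 : Fin m := ⟨0, hm⟩
  set lam : Fin m → ℝ := fun k => |c k| * Real.exp (∑ j, |α k j| * R) with hlam
  have hlam_nonneg : ∀ k, 0 ≤ lam k := fun k =>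
    mul_nonneg (abs_nonneg _) (Real.exp_pos _).le
  set γ : ℝ := -(∑ k, lam k) with hγ
  have hmem : γ ∈ {γ : ℝ | (c - Pi.single k0 γ) ∈ CSAGE α X} := by
    refine ⟨fun k => Pi.single k (c k) + Pi.single k0 (lam k), fun k => ?_, ?_⟩
    · constructor
      · intro i hik
        simp only [Pi.add_apply, Pi.single_apply]
        split_ifs with h1 h2 h2
        · exact absurd h1 hik
        · exact absurd h1 hik
        · simpa using (hlam_nonneg k)
        · simp
      · intro x hxX
        rw [Sig_add, Sig_single, Sig_single, hα]
        simp only [Pi.zero_apply, zero_mul, Finset.sum_const_zero, Real.exp_zero, mul_one]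
        have hxR : ∀ j, |x j| ≤ R := by
          intro j
          have := hR hxX
          simp only [Metric.mem_closedBall, dist_zero_right] at this
          calc |x j| ≤ ‖x‖ := by
                simpa using norm_le_pi_norm x j
            _ ≤ R := this
        have hdot : ∑ j, α k j * x j ≤ ∑ j, |α k j| * R := by
          apply Finset.sum_le_sum
          intro j _
          calc α k j * x j ≤ |α k j * x j| := le_abs_self _
            _ = |α k j| * |x j| := abs_mul _ _
            _ ≤ |α k j| * R := mul_le_mul_of_nonneg_left (hxR j) (abs_nonneg _)
        have hexp : Real.exp (∑ j, α k j * x j) ≤ Real.exp (∑ j, |α k j| * R) :=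
          Real.exp_le_exp.mpr hdot
        have : -(c k * Real.exp (∑ j, α k j * x j)) ≤ lam k := by
          rw [hlam]
          calc -(c k * Real.exp (∑ j, α k j * x j))
              ≤ |c k * Real.exp (∑ j, α k j * x j)| := neg_le_abs _
            _ = |c k| * Real.exp (∑ j, α k j * x j) := by
                rw [abs_mul, abs_of_pos (Real.exp_pos _)]
            _ ≤ |c k| * Real.exp (∑ j, |α k j| * R) :=
                mul_le_mul_of_nonneg_left hexp (abs_nonneg _)
        linarith
    · funext i
      simp only [Finset.sum_apply, Pi.add_apply, Pi.sub_apply, Pi.single_apply,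
        Finset.sum_add_distrib, Finset.sum_ite_eq]
      simp [hγ]
      by_cases hi : i = k0 <;> simp [hi]
  calc (⊥ : EReal) < (γ : EReal) := EReal.bot_lt_coe γ
    _ ≤ _ := le_biSup _ hmem
end

section
/- Let v* be an optimal solution of the dual SAGE relaxation inf{ cᵀv : v ∈ C_SAGE(α,X)†, v₁ = 1, Gv ≥ 0, Φv = 0 }, and suppose v* = exp(αx) (componentwise) for some x ∈ X. Then x is an optimal solution of the constrained signomial program inf{ f(x) : x ∈ X, g(x) ≥ 0, φ(x) = 0 }, where f = Sig(α,c), the rows of G give the coefficient vectors of the gᵢ, and the rows of Φ give the coefficient vectors of the φᵢ, and α₁ = 0. -/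
open Finset

/-- The dual cone of a set of coefficient vectors. -/
def dualCone {m : ℕ} (S : Set (Fin m → ℝ)) : Set (Fin m → ℝ) :=
  {v | ∀ c ∈ S, 0 ≤ ∑ i, v i * c i}

/-- If the optimal solution of the dual SAGE relaxation is an exponential moment
vector of a point of X, then that point solves the signomial program. -/
theorem dual_sage_solution_recovery {n m k₁ k₂ : ℕ} (hm : 0 < m)
    (α : Fin m → Fin n → ℝ) (hα : α ⟨0, hm⟩ = 0) (c : Fin m → ℝ)
    (G : Fin k₁ → Fin m → ℝ) (Φ : Fin k₂ → Fin m → ℝ) (X : Set (Fin n → ℝ))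
    (v : Fin m → ℝ)
    (hvdual : v ∈ dualCone (CSAGE α X)) (hv1 : v ⟨0, hm⟩ = 1)
    (hvG : ∀ i, 0 ≤ ∑ j, G i j * v j) (hvΦ : ∀ i, (∑ j, Φ i j * v j) = 0)
    (hopt : ∀ u : Fin m → ℝ, u ∈ dualCone (CSAGE α X) → u ⟨0, hm⟩ = 1 →
      (∀ i, 0 ≤ ∑ j, G i j * u j) → (∀ i, (∑ j, Φ i j * u j) = 0) →
      (∑ j, c j * v j) ≤ ∑ j, c j * u j)
    (x : Fin n → ℝ) (hx : x ∈ X)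
    (hv : ∀ j, v j = Real.exp (∑ t, α j t * x t)) :
    ((∀ i, 0 ≤ Sig α (G i) x) ∧ (∀ i, Sig α (Φ i) x = 0)) ∧
      ∀ y ∈ X, (∀ i, 0 ≤ Sig α (G i) y) → (∀ i, Sig α (Φ i) y = 0) →
        Sig α c x ≤ Sig α c y := by

  have hSig : ∀ (w : Fin m → ℝ) (z : Fin n → ℝ),
      Sig α w z = ∑ j, w j * Real.exp (∑ t, α j t * x t) → True := fun _ _ _ => trivial
  -- key rewriting: for any coefficient vector w, Sig α w x = ∑ j, w j * v j
  have key : ∀ w : Fin m → ℝ, Sig α w x = ∑ j, w j * v j := by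
    intro w
    unfold Sig
    exact Finset.sum_congr rfl (fun j _ => by rw [hv j])
  -- CSAGE membership implies nonnegativity on X
  have hcs : ∀ w ∈ CSAGE α X, ∀ y ∈ X, 0 ≤ Sig α w y := by
    rintro w ⟨d, hd, rfl⟩ y hy
    have : Sig α (∑ k, d k) y = ∑ k, Sig α (d k) y := by
      unfold Sig
      rw [Finset.sum_comm]
      exact Finset.sum_congr rfl (fun j _ => by
        rw [Finset.sum_apply, Finset.sum_mul])
    rw [this]
    exact Finset.sum_nonneg fun k _ => (hd k).2 y hy
  refine ⟨⟨fun i => by rw [key]; exact hvG i, fun i => by rw [key]; exact hvΦ i⟩, ?_⟩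
  intro y hy hGy hΦy
  set u : Fin m → ℝ := fun j => Real.exp (∑ t, α j t * y t) with hu
  have keyu : ∀ w : Fin m → ℝ, Sig α w y = ∑ j, w j * u j := fun w => rfl
  have hudual : u ∈ dualCone (CSAGE α X) := by
    intro w hw
    have := hcs w hw y hy
    rw [keyu] at this
    calc (0:ℝ) ≤ ∑ i, w i * u i := this
    _ = ∑ i, u i * w i := Finset.sum_congr rfl (fun i _ => mul_comm _ _)
  have hu1 : u ⟨0, hm⟩ = 1 := by
    simp [hu, hα]
  have h := hopt u hudual hu1
    (fun i => by rw [← keyu]; exact hGy i)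
    (fun i => by rw [← keyu]; exact hΦy i)
  rw [key c, keyu c]
  exact h
end

section
/- Let α ∈ ℕ^{m×n} and suppose X ⊆ ℝⁿ₊ satisfies X = cl{ x : 0 < x, H(x) ≤ 1 } for a continuous map H : ℝⁿ → ℝ^r. Set Y = { y ∈ ℝⁿ : H(exp y) ≤ 1 }. Then the conditional SAGE polynomial cone equals the conditional SAGE signomial cone: C_POLY-SAGE(α, X) = C_SAGE(α, Y). -/
open Finset

/-- A polynomial with exponent matrix `α` and coefficient vector `c`. -/
noncomputable def PolyFn {n m : ℕ} (α : Fin m → Fin n → ℕ) (c : Fin m → ℝ)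
    (x : Fin n → ℝ) : ℝ :=
  ∑ i, c i * ∏ j, x j ^ α i j

/-- The `i`-th conditional AGE polynomial cone. -/
def CPolyAGE {n m : ℕ} (α : Fin m → Fin n → ℕ) (i : Fin m)
    (X : Set (Fin n → ℝ)) : Set (Fin m → ℝ) :=
  {c | (∀ x ∈ X, 0 ≤ PolyFn α c x) ∧
       (∀ j, j ≠ i → (∃ x ∈ X, 0 < ∏ t, x t ^ α j t) → 0 ≤ c j) ∧
       (∀ j, j ≠ i → (∃ x ∈ X, ∏ t, x t ^ α j t < 0) → c j ≤ 0)}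

/-- The conditional SAGE polynomial cone. -/
def CPolySAGE {n m : ℕ} (α : Fin m → Fin n → ℕ) (X : Set (Fin n → ℝ)) :
    Set (Fin m → ℝ) :=
  {c | ∃ d : Fin m → Fin m → ℝ, (∀ i, d i ∈ CPolyAGE α i X) ∧ c = ∑ i, d i}

/-- The set of signomial-representative coefficient vectors. -/
def SR {n m : ℕ} (α : Fin m → Fin n → ℕ) (c : Fin m → ℝ) : Set (Fin m → ℝ) :=
  {ch | (∀ i, (∀ t, Even (α i t)) → ch i = c i) ∧
        (∀ i, ¬ (∀ t, Even (α i t)) → ch i ≤ -|c i|)}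

lemma sig_eq_poly {n m : ℕ} (α : Fin m → Fin n → ℕ) (c : Fin m → ℝ) (y : Fin n → ℝ) :
    Sig (fun i j => (α i j : ℝ)) c y = PolyFn α c (fun j => Real.exp (y j)) := by
  unfold Sig PolyFn
  refine Finset.sum_congr rfl fun i _ => ?_
  congr 1
  rw [Real.exp_sum]
  exact Finset.prod_congr rfl fun j _ => Real.exp_nat_mul _ _

lemma continuous_polyFn {n m : ℕ} (α : Fin m → Fin n → ℕ) (c : Fin m → ℝ) :
    Continuous (PolyFn α c) := by
  unfold PolyFn
  exact continuous_finset_sum _ fun i _ => continuous_const.mul <|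
    continuous_finset_prod _ fun j _ => (continuous_apply j).pow _

/-- For X the closure of a set in the positive orthant cut out by `H(x) ≤ 1`,
the conditional SAGE polynomial cone equals a conditional SAGE signomial cone. -/
theorem cpolysage_eq_csage_of_pos {n m r : ℕ} (α : Fin m → Fin n → ℕ)
    (H : (Fin n → ℝ) → (Fin r → ℝ)) (hH : Continuous H)
    (X : Set (Fin n → ℝ))
    (hX : X = closure {x : Fin n → ℝ | (∀ j, 0 < x j) ∧ ∀ s, H x s ≤ 1}) :
    CPolySAGE α X =
      CSAGE (fun i j => (α i j : ℝ))
        {y : Fin n → ℝ | ∀ s, H (fun j => Real.exp (y j)) s ≤ 1} := by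
  set S : Set (Fin n → ℝ) := {x | (∀ j, 0 < x j) ∧ ∀ s, H x s ≤ 1} with hS
  have hexpY : ∀ y : Fin n → ℝ,
      (∀ s, H (fun j => Real.exp (y j)) s ≤ 1) → (fun j => Real.exp (y j)) ∈ S :=
    fun y hy => ⟨fun j => Real.exp_pos _, hy⟩
  have hSX : S ⊆ X := hX ▸ subset_closure
  have hXnn : ∀ x ∈ X, ∀ j, 0 ≤ x j := by
    intro x hx j
    have hsub : X ⊆ {x : Fin n → ℝ | 0 ≤ x j} := hX ▸ closure_minimal
      (fun z hz => le_of_lt (hz.1 j))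
      (isClosed_le continuous_const (continuous_apply j))
    exact hsub hx
  ext c
  constructor
  · rintro ⟨d, hd, rfl⟩
    by_cases hne : ∃ y : Fin n → ℝ, ∀ s, H (fun j => Real.exp (y j)) s ≤ 1
    · obtain ⟨y0, hy0⟩ := hne
      refine ⟨d, fun k => ⟨?_, ?_⟩, rfl⟩
      · intro i hik
        refine (hd k).2.1 i hik ⟨fun j => Real.exp (y0 j), hSX (hexpY y0 hy0), ?_⟩
        exact Finset.prod_pos fun t _ => pow_pos (Real.exp_pos _) _
      · intro y hy
        rw [sig_eq_poly]
        exact (hd k).1 _ (hSX (hexpY y hy))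
    · refine ⟨fun k i => if i = k then (∑ j, d j) i else 0, fun k => ⟨?_, ?_⟩, ?_⟩
      · intro i hik; simp [hik]
      · intro y hy; exact absurd ⟨y, hy⟩ hne
      · funext i
        simp [Finset.sum_apply, Finset.sum_ite_eq]
  · rintro ⟨d, hd, rfl⟩
    refine ⟨d, fun k => ⟨?_, ?_, ?_⟩, rfl⟩
    · intro x hx
      have hcl : X ⊆ {x : Fin n → ℝ | 0 ≤ PolyFn α (d k) x} := by
        rw [hX]
        refine closure_minimal ?_ (isClosed_le continuous_const (continuous_polyFn α (d k)))
        intro z hz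
        have hz' : (fun j => Real.exp (Real.log (z j))) = z :=
          funext fun j => Real.exp_log (hz.1 j)
        have hyY : ∀ s, H (fun j => Real.exp (Real.log (z j))) s ≤ 1 := by
          rw [hz']; exact hz.2
        have h0 := (hd k).2 _ hyY
        rwa [sig_eq_poly, hz'] at h0
      exact hcl hx
    · intro j hjk _
      exact (hd k).1 j hjk
    · rintro j hjk ⟨x, hx, hlt⟩
      exact absurd hlt (not_lt.2 (Finset.prod_nonneg fun t _ => pow_nonneg (hXnn x hx t) _))
end

section
/- If ĉ ∈ SR(α,c) is a signomial representative of the coefficient vector c and the signomial Sig(α,ĉ) is nonnegative on Y = { y : H(exp y) ≤ 1 }, then the polynomial Poly(α,c) is nonnegative on X = cl{ x : 0 < |x|, H(|x|) ≤ 1 }. -/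
open Finset

/-- Nonnegativity of a signomial representative on Y implies nonnegativity of
the original polynomial on the sign-symmetric set X. -/
theorem sigrep_nonneg_implies_poly_nonneg {n m r : ℕ} (α : Fin m → Fin n → ℕ)
    (H : (Fin n → ℝ) → (Fin r → ℝ)) (hH : Continuous H)
    (c ch : Fin m → ℝ) (hSR : ch ∈ SR α c)
    (hnn : ∀ y : Fin n → ℝ, (∀ s, H (fun j => Real.exp (y j)) s ≤ 1) →
      0 ≤ Sig (fun i j => (α i j : ℝ)) ch y) :
    ∀ x ∈ closure {x : Fin n → ℝ | (∀ j, 0 < |x j|) ∧ ∀ s, H (fun j => |x j|) s ≤ 1},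
      0 ≤ PolyFn α c x := by
  have hcont : Continuous (PolyFn α c) := by
    unfold PolyFn
    exact continuous_finset_sum _ fun i _ => (continuous_const.mul
      (continuous_finset_prod _ fun j _ => (continuous_apply j).pow _))
  have hset : {x : Fin n → ℝ | (∀ j, 0 < |x j|) ∧ ∀ s, H (fun j => |x j|) s ≤ 1}
      ⊆ {x | 0 ≤ PolyFn α c x} := by
    rintro x ⟨hx0, hxH⟩
    set y : Fin n → ℝ := fun j => Real.log |x j| with hy
    have hexp : (fun j => Real.exp (y j)) = fun j => |x j| := by
      funext j; exact Real.exp_log (hx0 j)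
    have hY := hnn y (by rw [hexp]; exact hxH)
    have hSig : Sig (fun i j => (α i j : ℝ)) ch y = ∑ i, ch i * ∏ j, |x j| ^ α i j := by
      unfold Sig
      refine Finset.sum_congr rfl fun i _ => ?_
      congr 1
      rw [Real.exp_sum]
      refine Finset.prod_congr rfl fun j _ => ?_
      show Real.exp ((α i j : ℝ) * y j) = _
      rw [Real.exp_nat_mul, Real.exp_log (hx0 j)]
    rw [hSig] at hY
    have hterm : ∀ i : Fin m, ch i * ∏ j, |x j| ^ α i j ≤ c i * ∏ j, x j ^ α i j := by
      intro i
      by_cases he : ∀ t, Even (α i t)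
      · rw [hSR.1 i he,
          Finset.prod_congr rfl fun j _ => ((he j).pow_abs (x j))]
      · have h1 : ch i ≤ -|c i| := hSR.2 i he
        have h2 : (0:ℝ) ≤ ∏ j, |x j| ^ α i j :=
          Finset.prod_nonneg fun j _ => pow_nonneg (abs_nonneg _) _
        calc ch i * ∏ j, |x j| ^ α i j ≤ -|c i| * ∏ j, |x j| ^ α i j :=
              mul_le_mul_of_nonneg_right h1 h2
          _ = -|c i * ∏ j, x j ^ α i j| := by
              rw [abs_mul, abs_prod]
              simp only [abs_pow]
              ring
          _ ≤ c i * ∏ j, x j ^ α i j := neg_abs_le _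
    have := Finset.sum_le_sum fun i (_ : i ∈ Finset.univ) => hterm i
    unfold PolyFn
    exact hY.trans this
  intro x hx
  exact closure_minimal hset (isClosed_le continuous_const hcont) hx
end

section
/- Let w be a positive function on a set X ⊆ ℝⁿ and f any function on X. Then f is nonnegative on X if and only if the product w·f is nonnegative on X. Consequently, for a signomial f = Sig(α,c) with α₁ = 0 and modulator w = Sig(α,1), the sequence of modulated SAGE bounds f^(ℓ)_X = sup{ γ : w^ℓ·(f − γ) is X-SAGE } is nondecreasing in ℓ and satisfies f^(ℓ)_X ≤ f*_X for all ℓ ≥ 0. -/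
open Finset

/-- A function is an X-AGE signomial if it is a signomial, nonnegative on X,
with at most one negative coefficient. -/
def IsXAGE {n : ℕ} (X : Set (Fin n → ℝ)) (h : (Fin n → ℝ) → ℝ) : Prop :=
  ∃ (m : ℕ) (β : Fin m → Fin n → ℝ) (c : Fin m → ℝ) (k : Fin m),
    (∀ i, i ≠ k → 0 ≤ c i) ∧ (∀ x ∈ X, 0 ≤ h x) ∧ h = Sig β c

/-- A function is an X-SAGE signomial if it is a finite sum of X-AGE signomials. -/
def IsXSAGE {n : ℕ} (X : Set (Fin n → ℝ)) (h : (Fin n → ℝ) → ℝ) : Prop :=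
  ∃ (N : ℕ) (g : Fin N → (Fin n → ℝ) → ℝ),
    (∀ i, IsXAGE X (g i)) ∧ h = fun x => ∑ i, g i x

lemma isXAGE_exp_mul {n : ℕ} (X : Set (Fin n → ℝ)) (a : Fin n → ℝ)
    {h : (Fin n → ℝ) → ℝ} (hh : IsXAGE X h) :
    IsXAGE X (fun x => Real.exp (∑ j, a j * x j) * h x) := by
  obtain ⟨m, β, cc, k, hc, hpos, rfl⟩ := hh
  refine ⟨m, fun i j => β i j + a j, cc, k, hc, ?_, ?_⟩
  · intro x hx
    exact mul_nonneg (Real.exp_nonneg _) (hpos x hx)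
  · funext x
    simp only [Sig, Finset.mul_sum]
    refine Finset.sum_congr rfl fun i _ => ?_
    have hs : (∑ j, (β i j + a j) * x j) = (∑ j, β i j * x j) + (∑ j, a j * x j) := by
      rw [← Finset.sum_add_distrib]
      exact Finset.sum_congr rfl fun j _ => by ring
    rw [hs, Real.exp_add]
    ring

lemma isXSAGE_add {n : ℕ} {X : Set (Fin n → ℝ)} {h1 h2 : (Fin n → ℝ) → ℝ}
    (H1 : IsXSAGE X h1) (H2 : IsXSAGE X h2) :
    IsXSAGE X (fun x => h1 x + h2 x) := by
  obtain ⟨N1, g1, hg1, rfl⟩ := H1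
  obtain ⟨N2, g2, hg2, rfl⟩ := H2
  refine ⟨N1 + N2, Fin.append g1 g2, ?_, ?_⟩
  · intro i
    refine Fin.addCases (fun i => ?_) (fun i => ?_) i
    · rw [Fin.append_left]; exact hg1 i
    · rw [Fin.append_right]; exact hg2 i
  · funext x
    rw [Fin.sum_univ_add]
    simp [Fin.append_left, Fin.append_right]

lemma isXSAGE_sum {n N : ℕ} {X : Set (Fin n → ℝ)} (g : Fin N → (Fin n → ℝ) → ℝ)
    (hg : ∀ i, IsXSAGE X (g i)) :
    IsXSAGE X (fun x => ∑ i, g i x) := by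
  induction N with
  | zero => exact ⟨0, fun _ => 0, fun i => i.elim0, by funext x; simp⟩
  | succ N ih =>
    have := isXSAGE_add (ih (fun i => g i.castSucc) (fun i => hg _)) (hg (Fin.last N))
    convert this using 1
    funext x
    rw [Fin.sum_univ_castSucc]

lemma isXSAGE_w_mul_age {n m : ℕ} (α : Fin m → Fin n → ℝ) (X : Set (Fin n → ℝ))
    {h : (Fin n → ℝ) → ℝ} (H : IsXAGE X h) :
    IsXSAGE X (fun x => Sig α (fun _ => 1) x * h x) := by
  refine ⟨m, fun i x => Real.exp (∑ j, α i j * x j) * h x,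
    fun i => isXAGE_exp_mul X (α i) H, ?_⟩
  funext x
  simp [Sig, Finset.sum_mul]

lemma isXSAGE_w_mul {n m : ℕ} (α : Fin m → Fin n → ℝ) (X : Set (Fin n → ℝ))
    {h : (Fin n → ℝ) → ℝ} (H : IsXSAGE X h) :
    IsXSAGE X (fun x => Sig α (fun _ => 1) x * h x) := by
  obtain ⟨N, g, hg, rfl⟩ := H
  have := isXSAGE_sum (fun i x => Sig α (fun _ => 1) x * g i x)
    (fun i => isXSAGE_w_mul_age α X (hg i))
  convert this using 1
  funext x
  simp [Finset.mul_sum]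

lemma isXSAGE_nonneg {n : ℕ} {X : Set (Fin n → ℝ)} {h : (Fin n → ℝ) → ℝ}
    (H : IsXSAGE X h) : ∀ x ∈ X, 0 ≤ h x := by
  obtain ⟨N, g, hg, rfl⟩ := H
  intro x hx
  refine Finset.sum_nonneg fun i _ => ?_
  obtain ⟨_, _, _, _, _, hp, _⟩ := hg i
  exact hp x hx

/-- Modulation: multiplying by a positive function preserves nonnegativity,
and the modulated SAGE bounds are nondecreasing and bounded by the true
infimum. -/
theorem modulated_sage_bounds {n m : ℕ} (hm : 0 < m)
    (α : Fin m → Fin n → ℝ) (hα : α ⟨0, hm⟩ = 0) (c : Fin m → ℝ)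
    (X : Set (Fin n → ℝ)) :
    (∀ w f : (Fin n → ℝ) → ℝ, (∀ x ∈ X, 0 < w x) →
      ((∀ x ∈ X, 0 ≤ f x) ↔ ∀ x ∈ X, 0 ≤ w x * f x)) ∧
    Monotone (fun l : ℕ =>
      ⨆ γ ∈ {γ : ℝ | IsXSAGE X
        (fun x => (Sig α (fun _ => 1) x) ^ l * (Sig α c x - γ))}, (γ : EReal)) ∧
    ∀ l : ℕ,
      (⨆ γ ∈ {γ : ℝ | IsXSAGE X
          (fun x => (Sig α (fun _ => 1) x) ^ l * (Sig α c x - γ))}, (γ : EReal))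
        ≤ ⨅ x ∈ X, ((Sig α c x : ℝ) : EReal) := by
  have hwpos : ∀ x : Fin n → ℝ, 0 < Sig α (fun _ => 1) x := by
    intro x
    have : Nonempty (Fin m) := ⟨⟨0, hm⟩⟩
    refine Finset.sum_pos (fun i _ => ?_) Finset.univ_nonempty
    simpa using Real.exp_pos _
  refine ⟨?_, ?_, ?_⟩
  · intro w f hw
    constructor
    · intro hf x hx
      exact mul_nonneg (hw x hx).le (hf x hx)
    · intro hwf x hx
      nlinarith [hw x hx, hwf x hx]
  · refine monotone_nat_of_le_succ fun l => ?_
    refine iSup₂_le fun γ hγ => ?_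
    have hγ' : IsXSAGE X
        (fun x => (Sig α (fun _ => 1) x) ^ (l + 1) * (Sig α c x - γ)) := by
      have := isXSAGE_w_mul α X hγ
      convert this using 1
      funext x
      ring
    exact le_iSup₂_of_le γ hγ' le_rfl
  · intro l
    refine iSup₂_le fun γ hγ => le_iInf₂ fun x hx => ?_
    have hnn := isXSAGE_nonneg hγ x hx
    have hp : (0:ℝ) < (Sig α (fun _ => 1) x) ^ l := pow_pos (hwpos x) l
    have : γ ≤ Sig α c x := by nlinarith
    exact EReal.coe_le_coe_iff.mpr this
end

section
/- The product of a signomial with all nonnegative coefficients (a posynomial) and an X-AGE signomial is X-SAGE. More precisely, if p = Sig(β,d) with d ≥ 0 and f = Sig(α,c) is nonnegative on X with at most one negative coefficient, then p·f, expressed as a signomial over the exponent sums βⱼ + αᵢ, has a decomposition as a sum of signomials each nonnegative on X with at most one negative coefficient. -/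
open Finset

/-- The product of a posynomial and an X-AGE signomial is X-SAGE. -/
theorem posynomial_mul_age_is_sage {n m m' : ℕ} (X : Set (Fin n → ℝ))
    (β : Fin m' → Fin n → ℝ) (d : Fin m' → ℝ) (hd : ∀ j, 0 ≤ d j)
    (α : Fin m → Fin n → ℝ) (c : Fin m → ℝ) (k : Fin m)
    (hc : ∀ i, i ≠ k → 0 ≤ c i) (hf : ∀ x ∈ X, 0 ≤ Sig α c x) :
    IsXSAGE X (fun x => Sig β d x * Sig α c x) := by

  refine ⟨m', fun j x => d j * Real.exp (∑ l, β j l * x l) * Sig α c x, ?_, ?_⟩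
  · intro j
    refine ⟨m, fun i l => β j l + α i l, fun i => d j * c i, k, ?_, ?_, ?_⟩
    · intro i hi
      exact mul_nonneg (hd j) (hc i hi)
    · intro x hx
      exact mul_nonneg (mul_nonneg (hd j) (Real.exp_nonneg _)) (hf x hx)
    · funext x
      simp only [Sig, Finset.mul_sum, add_mul, Finset.sum_add_distrib, Real.exp_add]
      exact Finset.sum_congr rfl fun i _ => by ring
  · funext x
    simp only [Sig, Finset.sum_mul]
end
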